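/- arXiv:2208.04536 — 4 statements merged into one kernel-verified Lean document; each statement's English description precedes it below -/
import Mathlib

section
/- Let ((X, V), (U, Y)) be a twin cotorsion pair in an extriangulated category B such that (X, Y) is a cotorsion pair in a thick subcategory S of B. Then S_R = S_L = S, where S_L (resp. S_R) is the class of objects B admitting an E-triangle Y' → X' → B ⤳ (resp. B → Y' → X' ⤳) with X' ∈ X, Y' ∈ Y. In particular ((X,V),(U,Y)) is a Hovey twin cotorsion pair. -/
open CategoryTheory CategoryTheory.Limits

universe w v u

/-- The basic data of an extriangulated structure (in the sense of Nakaoka–Palu)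
on an additive category `C`: an `E`-extension group `E X A` for every pair of
objects (contravariant in the first variable, covariant in the second), and the
class of `𝔼`-triangles `A ⟶ B ⟶ X` (sequences realizing some `𝔼`-extension),
together with two basic consequences of the Nakaoka–Palu axioms. -/
structure ExtStruct (C : Type u) [Category.{v} C] [Preadditive C] where
  /-- `E X A` is the abelian group of `𝔼`-extensions of `X` by `A`. -/
  E : C → C → AddCommGrpCat.{w}
  /-- `IsTri f g` states that `A ⟶ B ⟶ X` is an `𝔼`-triangle. -/
  IsTri : ∀ {A B X : C}, (A ⟶ B) → (B ⟶ X) → Prop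
  /-- In an `𝔼`-triangle the composition vanishes. -/
  tri_comp_zero : ∀ {A B X : C} (f : A ⟶ B) (g : B ⟶ X), IsTri f g → f ≫ g = 0
  /-- Every `𝔼`-extension is realized by some `𝔼`-triangle. -/
  tri_realize : ∀ {A X : C}, (E X A) → ∃ (B : C) (f : A ⟶ B) (g : B ⟶ X), IsTri f g

namespace ExtStruct

variable {C : Type u} [Category.{v} C] [Preadditive C] (S : ExtStruct.{w} C)

/-- `𝔼(U, V) = 0` : all extension groups `E X A` with `X ∈ U`, `A ∈ V` vanish. -/
def ExtVanish (U V : Set C) : Prop :=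
  ∀ X ∈ U, ∀ A ∈ V, ∀ δ : S.E X A, δ = 0

/-- A morphism is an inflation if it occurs as the first map of an `𝔼`-triangle. -/
def Inflation {A B : C} (f : A ⟶ B) : Prop := ∃ (X : C) (g : B ⟶ X), S.IsTri f g

/-- A morphism is a deflation if it occurs as the second map of an `𝔼`-triangle. -/
def Deflation {B X : C} (g : B ⟶ X) : Prop := ∃ (A : C) (f : A ⟶ B), S.IsTri f g

/-- Condition (WIC) of Nakaoka–Palu. -/
def WIC : Prop :=
  (∀ {A B X : C} (f : A ⟶ B) (g : B ⟶ X), S.Deflation (f ≫ g) → S.Deflation g) ∧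
  (∀ {A B X : C} (f : A ⟶ B) (g : B ⟶ X), S.Inflation (f ≫ g) → S.Inflation f)

/-- Projective objects of the extriangulated category. -/
def Projective (P : C) : Prop :=
  ∀ ⦃A B X : C⦄ (f : A ⟶ B) (g : B ⟶ X), S.IsTri f g →
    ∀ c : P ⟶ X, ∃ b : P ⟶ B, b ≫ g = c

/-- Injective objects of the extriangulated category. -/
def Injective (I : C) : Prop :=
  ∀ ⦃A B X : C⦄ (f : A ⟶ B) (g : B ⟶ X), S.IsTri f g →
    ∀ a : A ⟶ I, ∃ b : B ⟶ I, f ≫ b = a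

/-- `M` is closed under extensions. -/
def ExtensionClosed (M : Set C) : Prop :=
  ∀ ⦃A B X : C⦄ (f : A ⟶ B) (g : B ⟶ X), S.IsTri f g → A ∈ M → X ∈ M → B ∈ M

/-- `M` is closed under taking cones of `𝔼`-triangles. -/
def ConesClosed (M : Set C) : Prop :=
  ∀ ⦃A B X : C⦄ (f : A ⟶ B) (g : B ⟶ X), S.IsTri f g → A ∈ M → B ∈ M → X ∈ M

/-- `M` is closed under taking cocones of `𝔼`-triangles. -/
def CoconesClosed (M : Set C) : Prop :=
  ∀ ⦃A B X : C⦄ (f : A ⟶ B) (g : B ⟶ X), S.IsTri f g → B ∈ M → X ∈ M → A ∈ M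

end ExtStruct

variable {C : Type u} [Category.{v} C] [Preadditive C]

/-- A class of objects is closed under direct summands (retracts). -/
def IsSummandClosed (U : Set C) : Prop :=
  ∀ ⦃A B : C⦄, B ∈ U → (∃ (i : A ⟶ B) (p : B ⟶ A), i ≫ p = 𝟙 A) → A ∈ U

/-- `f` factors through an object of the class `W`. -/
def FactorsThru (W : Set C) {A B : C} (f : A ⟶ B) : Prop :=
  ∃ (W' : C) (a : A ⟶ W') (b : W' ⟶ B), W' ∈ W ∧ a ≫ b = f

/-- `(U, V)` is a cotorsion pair in the extriangulated category `(C, S)`. -/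
structure IsCotorsionPair (S : ExtStruct.{w} C) (U V : Set C) : Prop where
  summands_fst : IsSummandClosed U
  summands_snd : IsSummandClosed V
  ext_vanish : S.ExtVanish U V
  approx_fst : ∀ B : C, ∃ (VB UB : C) (f : VB ⟶ UB) (g : UB ⟶ B),
      VB ∈ V ∧ UB ∈ U ∧ S.IsTri f g
  approx_snd : ∀ B : C, ∃ (VB UB : C) (f : B ⟶ VB) (g : VB ⟶ UB),
      VB ∈ V ∧ UB ∈ U ∧ S.IsTri f g

/-- `((X, V), (U, Y))` is a twin cotorsion pair. -/
structure IsTwinCotorsionPair (S : ExtStruct.{w} C) (X V U Y : Set C) : Prop where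
  fst : IsCotorsionPair S X V
  snd : IsCotorsionPair S U Y
  subset : X ⊆ U

/-- `(X, Y)` is a cotorsion pair in the extension closed subcategory `M`
(with its inherited extriangulated structure). -/
structure IsCotorsionPairIn (S : ExtStruct.{w} C) (M : Set C) (X Y : Set C) : Prop where
  subset_fst : X ⊆ M
  subset_snd : Y ⊆ M
  summands_fst : ∀ ⦃A B : C⦄, A ∈ M → B ∈ X →
      (∃ (i : A ⟶ B) (p : B ⟶ A), i ≫ p = 𝟙 A) → A ∈ X
  summands_snd : ∀ ⦃A B : C⦄, A ∈ M → B ∈ Y →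
      (∃ (i : A ⟶ B) (p : B ⟶ A), i ≫ p = 𝟙 A) → A ∈ Y
  ext_vanish : S.ExtVanish X Y
  approx_fst : ∀ B ∈ M, ∃ (YB XB : C) (f : YB ⟶ XB) (g : XB ⟶ B),
      YB ∈ Y ∧ XB ∈ X ∧ S.IsTri f g
  approx_snd : ∀ B ∈ M, ∃ (YB XB : C) (f : B ⟶ YB) (g : YB ⟶ XB),
      YB ∈ Y ∧ XB ∈ X ∧ S.IsTri f g

/-- `S_L`: objects `B` admitting an `𝔼`-triangle `Y' → X' → B ⤳` with
`X' ∈ X`, `Y' ∈ Y`. -/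
def SLm (S : ExtStruct.{w} C) (X Y : Set C) : Set C :=
  {B | ∃ (Y' X' : C) (f : Y' ⟶ X') (g : X' ⟶ B), Y' ∈ Y ∧ X' ∈ X ∧ S.IsTri f g}

/-- `S_R`: objects `B` admitting an `𝔼`-triangle `B → Y' → X' ⤳` with
`X' ∈ X`, `Y' ∈ Y`. -/
def SRm (S : ExtStruct.{w} C) (X Y : Set C) : Set C :=
  {B | ∃ (Y' X' : C) (f : B ⟶ Y') (g : Y' ⟶ X'), Y' ∈ Y ∧ X' ∈ X ∧ S.IsTri f g}

/-- A thick subcategory: closed under direct summands and satisfying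
two-out-of-three for `𝔼`-triangles. -/
def IsThick (S : ExtStruct.{w} C) (M : Set C) : Prop :=
  IsSummandClosed M ∧ S.ExtensionClosed M ∧ S.ConesClosed M ∧ S.CoconesClosed M

/-- A cotorsion pair `(U, V)` is hereditary when `U` is closed under cocones and
`V` is closed under cones. -/
def IsHereditaryPair (S : ExtStruct.{w} C) (U V : Set C) : Prop :=
  S.CoconesClosed U ∧ S.ConesClosed V

/-- The class `R` of morphisms `f : B ⟶ C` admitting an `𝔼`-triangle
`B →f C → S' ⤳` with `S' ∈ M`; the Gabriel–Zisman localization `B/S` is the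
localization of `C` at this class. -/
def RClass (S : ExtStruct.{w} C) (M : Set C) : MorphismProperty C :=
  fun _ _ f => ∃ (S' : C) (g : _ ⟶ S'), S' ∈ M ∧ S.IsTri f g

theorem SRm_subset_of_coconesClosed {S : ExtStruct.{w} C} {X Y M : Set C}
    (hM : S.CoconesClosed M) (hX : X ⊆ M) (hY : Y ⊆ M) : SRm S X Y ⊆ M := by
  rintro B ⟨Y', X', f, g, hY', hX', htri⟩
  exact hM f g htri (hY hY') (hX hX')

theorem SLm_subset_of_conesClosed {S : ExtStruct.{w} C} {X Y M : Set C}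
    (hM : S.ConesClosed M) (hX : X ⊆ M) (hY : Y ⊆ M) : SLm S X Y ⊆ M := by
  rintro B ⟨Y', X', f, g, hY', hX', htri⟩
  exact hM f g htri (hY hY') (hX hX')

namespace IsCotorsionPairIn

variable {S : ExtStruct.{w} C} {M X Y : Set C}

theorem subset_SRm (h : IsCotorsionPairIn S M X Y) : M ⊆ SRm S X Y :=
  h.approx_snd

theorem subset_SLm (h : IsCotorsionPairIn S M X Y) : M ⊆ SLm S X Y :=
  h.approx_fst

end IsCotorsionPairIn

theorem cotorsionPairIn_thick_SR_eq_SL_eq_general (S : ExtStruct.{w} C) (X Y Sset : Set C)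
    (hthick : IsThick S Sset) (hctp : IsCotorsionPairIn S Sset X Y) :
    SRm S X Y = Sset ∧ SLm S X Y = Sset := by
  obtain ⟨-, -, hcones, hcocones⟩ := hthick
  exact ⟨(SRm_subset_of_coconesClosed hcocones hctp.subset_fst hctp.subset_snd).antisymm
      hctp.subset_SRm,
    (SLm_subset_of_conesClosed hcones hctp.subset_fst hctp.subset_snd).antisymm
      hctp.subset_SLm⟩

/-- Lemma 2.16: if `(X, Y)` is a cotorsion pair in a thick subcategory `S`,
then `S_R = S_L = S`; in particular the twin cotorsion pair
`((X, V), (U, Y))` is Hovey. -/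
theorem cotorsionPairIn_thick_SR_eq_SL_eq (S : ExtStruct.{w} C) (X V U Y Sset : Set C)
    (htw : IsTwinCotorsionPair S X V U Y)
    (hthick : IsThick S Sset) (hctp : IsCotorsionPairIn S Sset X Y) :
    SRm S X Y = Sset ∧ SLm S X Y = Sset :=
  cotorsionPairIn_thick_SR_eq_SL_eq_general S X Y Sset hthick hctp
end

section
/- Let B be a Krull-Schmidt extriangulated category satisfying (WIC) and C a full subcategory closed under direct summands. If f : C → B is a right C-approximation of B which is a deflation, then there exists a deflation f₁ : C₁ → B which is a minimal right C-approximation of B. Dually for left approximations and inflations. -/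
open CategoryTheory CategoryTheory.Limits

universe w v u

variable {C : Type u} [Category.{v} C] [Preadditive C]

/-! If a right `𝒞`-approximation `f : X ⟶ B` is not right minimal, some non-invertible `e` satisfies
`e ≫ f = f`. Fitting's lemma in the finite-dimensional algebra `End X` turns `e` into an idempotent
`p ≠ 𝟙 X` with `p ≫ f = f`; splitting `p` exhibits a proper summand `X₁` of `X` through which `f`
factors. The restriction of `f` to `X₁` is again a `𝒞`-approximation, again a deflation by (WIC),
and `dim End X₁ < dim End X`, so the process stops at a minimal one. Left approximations are
treated dually. -/

open Filter Module

/-- `p` is the component of `1` in `aⁿA` for the Fitting decomposition `A = ker aⁿ ⊕ aⁿA` of left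
multiplication by `a`. -/
theorem exists_isIdempotentElem_ne_one_commute_pow_mul_eq_zero {k A : Type*} [Field k] [Ring A]
    [Algebra k A] [Module.Finite k A] {a : A} (ha : ¬IsUnit a) :
    ∃ p : A, IsIdempotentElem p ∧ p ≠ 1 ∧ Commute a p ∧ ∃ n, a ^ n * (1 - p) = 0 := by
  obtain ⟨n, hn, hcompl⟩ := ((eventually_ge_atTop 1).and
    (LinearMap.mulLeft k a).eventually_isCompl_ker_pow_range_pow).exists
  rw [LinearMap.pow_mulLeft] at hcompl
  set K := LinearMap.ker (LinearMap.mulLeft k (a ^ n))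
  set R := LinearMap.range (LinearMap.mulLeft k (a ^ n))
  have hK_mul : ∀ {x : A} (y : A), x ∈ K → x * y ∈ K := fun {x} y (hx : a ^ n * x = 0) => by
    change a ^ n * (x * y) = 0
    rw [← mul_assoc, hx, zero_mul]
  have hR_mul : ∀ {x : A} (y : A), x ∈ R → x * y ∈ R := fun y ⟨z, hz⟩ =>
    ⟨z * y, by simp [← hz, mul_assoc]⟩
  have hmul_K : ∀ {x : A}, x ∈ K → a * x ∈ K := fun {x} (hx : a ^ n * x = 0) => by
    change a ^ n * (a * x) = 0
    rw [← mul_assoc, ← pow_succ, pow_succ', mul_assoc, hx, mul_zero]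
  have hmul_R : ∀ {x : A}, x ∈ R → a * x ∈ R := fun ⟨z, hz⟩ =>
    ⟨a * z, by simp [← hz, ← mul_assoc, ← pow_succ, ← pow_succ']⟩
  have hKR : ∀ {x y : A}, x ∈ K → y ∈ R → x = y → x = 0 := fun hx hy h =>
    Submodule.disjoint_def.1 hcompl.disjoint _ hx (h ▸ hy)
  obtain ⟨u, hu, p, hp, hup⟩ :=
    Submodule.mem_sup.1 (hcompl.sup_eq_top ▸ Submodule.mem_top : (1 : A) ∈ K ⊔ R)
  obtain rfl := eq_sub_of_add_eq hup
  have hpp : IsIdempotentElem p := by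
    have h : (1 - p) * p = 0 :=
      hKR (hK_mul p hu) (R.sub_mem hp (hR_mul p hp)) (by noncomm_ring)
    rwa [sub_mul, one_mul, sub_eq_zero, eq_comm] at h
  -- `a (1 - p) + a p` and `(1 - p) a + p a` are both decompositions of `a` along `K ⊕ R`.
  have hap : Commute a p := by
    have h : a * (1 - p) - (1 - p) * a = 0 :=
      hKR (K.sub_mem (hmul_K hu) (hK_mul a hu)) (R.sub_mem (hR_mul a hp) (hmul_R hp))
        (by noncomm_ring)
    rw [mul_sub, sub_mul, mul_one, one_mul, sub_sub_sub_cancel_left, sub_eq_zero] at h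
    exact h.symm
  refine ⟨p, hpp, ?_, hap, n, hu⟩
  rintro rfl
  obtain ⟨y, hy⟩ := hp
  have := IsArtinianRing.of_finite k A
  obtain ⟨m, rfl⟩ := Nat.exists_eq_add_of_le' hn
  exact ha (IsUnit.of_mul_eq_one (a ^ m * y) (by simpa [pow_succ', mul_assoc] using hy))

section Category

variable {𝒜 : Type*} [Category* 𝒜]

theorem CategoryTheory.End.pow_comp_of_comp_eq {X Y : 𝒜} {e : End X} {f : X ⟶ Y}
    (hf : e ≫ f = f) (n : ℕ) : (e ^ n) ≫ f = f := by
  induction n with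
  | zero => exact Category.id_comp f
  | succ n ih => rw [pow_succ', End.mul_def, Category.assoc, hf, ih]

theorem CategoryTheory.End.comp_pow_of_comp_eq {X Y : 𝒜} {e : End X} {f : Y ⟶ X}
    (hf : f ≫ e = f) (n : ℕ) : f ≫ e ^ n = f := by
  induction n with
  | zero => exact Category.comp_id f
  | succ n ih => rw [pow_succ, End.mul_def, ← Category.assoc, hf, ih]

def IsRightApproximation (𝒞 : Set 𝒜) {X B : 𝒜} (f : X ⟶ B) : Prop :=
  ∀ D ∈ 𝒞, ∀ g : D ⟶ B, ∃ h : D ⟶ X, h ≫ f = g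

def IsLeftApproximation (𝒞 : Set 𝒜) {B X : 𝒜} (f : B ⟶ X) : Prop :=
  ∀ D ∈ 𝒞, ∀ g : B ⟶ D, ∃ h : X ⟶ D, f ≫ h = g

def IsRightMinimal {X B : 𝒜} (f : X ⟶ B) : Prop :=
  ∀ e : X ⟶ X, e ≫ f = f → IsIso e

def IsLeftMinimal {B X : 𝒜} (f : B ⟶ X) : Prop :=
  ∀ e : X ⟶ X, f ≫ e = f → IsIso e

theorem IsRightApproximation.of_comp_eq {𝒞 : Set 𝒜} {X X' B : 𝒜} {f : X ⟶ B} {f' : X' ⟶ B}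
    (hf : IsRightApproximation 𝒞 f) (r : X ⟶ X') (h : r ≫ f' = f) :
    IsRightApproximation 𝒞 f' := fun D hD g =>
  let ⟨t, ht⟩ := hf D hD g
  ⟨t ≫ r, by rw [Category.assoc, h, ht]⟩

theorem IsLeftApproximation.of_comp_eq {𝒞 : Set 𝒜} {X X' B : 𝒜} {f : B ⟶ X} {f' : B ⟶ X'}
    (hf : IsLeftApproximation 𝒞 f) (s : X' ⟶ X) (h : f' ≫ s = f) :
    IsLeftApproximation 𝒞 f' := fun D hD g =>
  let ⟨t, ht⟩ := hf D hD g
  ⟨s ≫ t, by rw [← Category.assoc, h, ht]⟩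

end Category

section Linear

variable (k : Type*) [Field k] [Linear k C]

theorem exists_idempotent_ne_id_of_not_isIso {X : C} [Module.Finite k (X ⟶ X)] {e : End X}
    (he : ¬IsIso e) :
    ∃ p : X ⟶ X, p ≫ p = p ∧ p ≠ 𝟙 X ∧
      (∀ ⦃Y : C⦄ (f : X ⟶ Y), e ≫ f = f → p ≫ f = f) ∧
      (∀ ⦃Y : C⦄ (f : Y ⟶ X), f ≫ e = f → f ≫ p = f) := by
  have : Module.Finite k (End X) := ‹Module.Finite k (X ⟶ X)›
  obtain ⟨p, hpp, hp1, hep, n, hn⟩ := exists_isIdempotentElem_ne_one_commute_pow_mul_eq_zero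
    (k := k) (a := e) (by rwa [isUnit_iff_isIso])
  have hn' : (1 - p) * e ^ n = 0 :=
    ((Commute.one_left _).sub_left (hep.symm.pow_right n)).eq.trans hn
  refine ⟨p, hpp, hp1, fun Y f hf => ?_, fun Y f hf => ?_⟩
  · have h : (1 - p) ≫ f = 0 := by
      rw [← End.pow_comp_of_comp_eq hf n, ← Category.assoc, ← End.mul_def, hn, zero_comp]
    rwa [Preadditive.sub_comp, End.one_def, Category.id_comp, sub_eq_zero, eq_comm] at h
  · have h : f ≫ (1 - p) = 0 := by
      rw [← End.comp_pow_of_comp_eq hf n, Category.assoc, ← End.mul_def, hn', comp_zero]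
    rwa [Preadditive.comp_sub, End.one_def, Category.comp_id, sub_eq_zero, eq_comm] at h

theorem finrank_end_lt_of_retract [∀ X Y : C, Module.Finite k (X ⟶ Y)] {X Y : C}
    {s : Y ⟶ X} {r : X ⟶ Y} (hsr : s ≫ r = 𝟙 Y) (hrs : r ≫ s ≠ 𝟙 X) :
    finrank k (Y ⟶ Y) < finrank k (X ⟶ X) := by
  let φ : (Y ⟶ Y) →ₗ[k] (X ⟶ X) := Linear.leftComp k X r ∘ₗ Linear.rightComp k Y s
  have hφ : ∀ g, φ g = r ≫ g ≫ s := fun _ => rfl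
  have hinj : Function.Injective φ := Function.LeftInverse.injective (g := fun h => s ≫ h ≫ r)
    fun g => by simp [hφ, reassoc_of% hsr, hsr]
  have hid : 𝟙 X ∉ LinearMap.range φ := by
    rintro ⟨g, hg⟩
    refine hrs ?_
    calc r ≫ s = (r ≫ s) ≫ φ g := by rw [hg, Category.comp_id]
      _ = φ g := by simp [hφ, reassoc_of% hsr]
      _ = 𝟙 X := hg
  exact (LinearMap.finrank_le_finrank_of_injective hinj).lt_of_ne fun h =>
    hid ((LinearMap.injective_iff_surjective_of_finrank_eq_finrank h).1 hinj (𝟙 X))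

theorem IsRightApproximation.exists_isRightMinimal_deflation
    [∀ X Y : C, Module.Finite k (X ⟶ Y)] [IsIdempotentComplete C] {S : ExtStruct.{w} C}
    (hwic : S.WIC) {𝒞 : Set C} (h𝒞 : IsSummandClosed 𝒞) {X B : C} (hX : X ∈ 𝒞) {f : X ⟶ B}
    (happ : IsRightApproximation 𝒞 f) (hf : S.Deflation f) :
    ∃ (X₁ : C) (f₁ : X₁ ⟶ B), X₁ ∈ 𝒞 ∧ S.Deflation f₁ ∧
      IsRightApproximation 𝒞 f₁ ∧ IsRightMinimal f₁ := by
  induction hn : finrank k (X ⟶ X) using Nat.strong_induction_on generalizing X with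
  | _ n ih =>
  by_cases hmin : IsRightMinimal f
  · exact ⟨X, f, hX, hf, happ, hmin⟩
  obtain ⟨e, he, hne⟩ : ∃ e : X ⟶ X, e ≫ f = f ∧ ¬IsIso e := by
    simpa only [IsRightMinimal, not_forall, exists_prop] using hmin
  obtain ⟨p, hpp, hp1, hpf, -⟩ := exists_idempotent_ne_id_of_not_isIso k hne
  obtain ⟨X₁, s, r, hsr, rfl⟩ := IsIdempotentComplete.idempotents_split X p hpp
  have hrsf : r ≫ s ≫ f = f := by rw [← Category.assoc]; exact hpf f he
  exact ih _ (hn ▸ finrank_end_lt_of_retract k hsr hp1) (h𝒞 hX ⟨s, r, hsr⟩)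
    (happ.of_comp_eq r hrsf) (hwic.1 r _ (by rwa [hrsf])) rfl

theorem IsLeftApproximation.exists_isLeftMinimal_inflation
    [∀ X Y : C, Module.Finite k (X ⟶ Y)] [IsIdempotentComplete C] {S : ExtStruct.{w} C}
    (hwic : S.WIC) {𝒞 : Set C} (h𝒞 : IsSummandClosed 𝒞) {B X : C} (hX : X ∈ 𝒞) {f : B ⟶ X}
    (happ : IsLeftApproximation 𝒞 f) (hf : S.Inflation f) :
    ∃ (X₁ : C) (f₁ : B ⟶ X₁), X₁ ∈ 𝒞 ∧ S.Inflation f₁ ∧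
      IsLeftApproximation 𝒞 f₁ ∧ IsLeftMinimal f₁ := by
  induction hn : finrank k (X ⟶ X) using Nat.strong_induction_on generalizing X with
  | _ n ih =>
  by_cases hmin : IsLeftMinimal f
  · exact ⟨X, f, hX, hf, happ, hmin⟩
  obtain ⟨e, he, hne⟩ : ∃ e : X ⟶ X, f ≫ e = f ∧ ¬IsIso e := by
    simpa only [IsLeftMinimal, not_forall, exists_prop] using hmin
  obtain ⟨p, hpp, hp1, -, hfp⟩ := exists_idempotent_ne_id_of_not_isIso k hne
  obtain ⟨X₁, s, r, hsr, rfl⟩ := IsIdempotentComplete.idempotents_split X p hpp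
  have hfrs : (f ≫ r) ≫ s = f := by rw [Category.assoc]; exact hfp f he
  exact ih _ (hn ▸ finrank_end_lt_of_retract k hsr hp1) (h𝒞 hX ⟨s, r, hsr⟩)
    (happ.of_comp_eq s hfrs) (hwic.2 _ s (by rwa [hfrs])) rfl

end Linear

/-- Lemma 3.1: in a Krull–Schmidt extriangulated category with (WIC), a right
`𝒞`-approximation which is a deflation can be replaced by a minimal right
`𝒞`-approximation which is a deflation; dually for left approximations and
inflations. -/
theorem exists_minimal_approximation (k : Type*) [Field k]
    [CategoryTheory.Linear k C] [∀ A B : C, Module.Finite k (A ⟶ B)]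
    [IsIdempotentComplete C]
    (S : ExtStruct.{w} C) (hwic : S.WIC) (𝒞 : Set C) (hc : IsSummandClosed 𝒞) :
    (∀ ⦃B Cc : C⦄, Cc ∈ 𝒞 → ∀ f : Cc ⟶ B,
      (∀ D ∈ 𝒞, ∀ g : D ⟶ B, ∃ h : D ⟶ Cc, h ≫ f = g) → S.Deflation f →
      ∃ (C₁ : C) (f₁ : C₁ ⟶ B), C₁ ∈ 𝒞 ∧ S.Deflation f₁ ∧
        (∀ D ∈ 𝒞, ∀ g : D ⟶ B, ∃ h : D ⟶ C₁, h ≫ f₁ = g) ∧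
        (∀ e : C₁ ⟶ C₁, e ≫ f₁ = f₁ → IsIso e)) ∧
    (∀ ⦃B Cc : C⦄, Cc ∈ 𝒞 → ∀ f : B ⟶ Cc,
      (∀ D ∈ 𝒞, ∀ g : B ⟶ D, ∃ h : Cc ⟶ D, f ≫ h = g) → S.Inflation f →
      ∃ (C₁ : C) (f₁ : B ⟶ C₁), C₁ ∈ 𝒞 ∧ S.Inflation f₁ ∧
        (∀ D ∈ 𝒞, ∀ g : B ⟶ D, ∃ h : C₁ ⟶ D, f₁ ≫ h = g) ∧
        (∀ e : C₁ ⟶ C₁, f₁ ≫ e = f₁ → IsIso e)) :=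
  ⟨fun _ _ hCc _ happ hf =>
      IsRightApproximation.exists_isRightMinimal_deflation k hwic hc hCc happ hf,
    fun _ _ hCc _ happ hf =>
      IsLeftApproximation.exists_isLeftMinimal_inflation k hwic hc hCc happ hf⟩
end

section
/- Let B be an extriangulated category, S a subcategory, and R the class of morphisms f : B → C admitting an E-triangle B →^f C → S' ⤳ with S' ∈ S. Then in the Gabriel-Zisman localization B/S := B[R⁻¹]: (1) for any object X and any S' ∈ S, the projection X ⊕ S' → X is invertible with inverse the canonical inclusion X → X ⊕ S'; (2) if f, f' : B → C and f' factors through an object of W = X ∩ Y (so that its image in B/[W] vanishes), then the images of f + f' and f in B/S coincide. -/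
open CategoryTheory CategoryTheory.Limits

universe w v u

variable {C : Type u} [Category.{v} C] [Preadditive C]

/- Under (WIC) every projection `A ⊞ S' ⟶ S'` is a deflation; its cocone `w` lies in `R` when
`S' ∈ S` and factors through `biprod.inl` because `w ≫ biprod.snd = 0`. So `Q(inl)` is a split
mono that is also epi, hence an isomorphism with inverse `Q(fst)`. For (2), write
`f' = a ≫ b` with the middle object in `X ⊆ S`; then `f + f' = lift (𝟙, a) ≫ desc (f, b)` and
`f = inl ≫ desc (f, b)`, and `lift (𝟙, a)` and `inl` are two sections of `fst`, which become equal
once `Q(fst)` is invertible. -/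

theorem isIso_of_comp_eq_id_of_isIso_comp {D : Type*} [Category D] {W A B : D}
    {i : A ⟶ B} {p : B ⟶ A} (hip : i ≫ p = 𝟙 A) (g : W ⟶ A) [IsIso (g ≫ i)] : IsIso i :=
  haveI : Epi i := epi_of_epi g i
  haveI : IsSplitMono i := IsSplitMono.mk' ⟨p, hip⟩
  isIso_of_epi_of_isSplitMono i

namespace ExtStruct

variable {S : ExtStruct.{w} C}

theorem WIC.deflation_id (hwic : S.WIC) (A : C) : S.Deflation (𝟙 A) := by
  obtain ⟨_, f, g, hfg⟩ := S.tri_realize (0 : S.E A A)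
  exact hwic.1 g (𝟙 A) (by simpa using ⟨_, f, hfg⟩)

theorem WIC.deflation_biprod_snd [HasBinaryBiproducts C] (hwic : S.WIC) (A B : C) :
    S.Deflation (biprod.snd : A ⊞ B ⟶ B) :=
  hwic.1 biprod.inr biprod.snd (by simpa using hwic.deflation_id B)

end ExtStruct

section Localization

variable [HasBinaryBiproducts C] {S : ExtStruct.{w} C} {M : Set C}

theorem exists_rClass_eq_comp_biprod_inl (hwic : S.WIC) (A : C) {S' : C} (hS' : S' ∈ M) :
    ∃ (A' : C) (w : A' ⟶ A ⊞ S') (g : A' ⟶ A), RClass S M w ∧ g ≫ biprod.inl = w := by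
  obtain ⟨A', w, hw⟩ := hwic.deflation_biprod_snd A S'
  have hw₀ : w ≫ biprod.snd = 0 := S.tri_comp_zero _ _ hw
  exact ⟨A', w, w ≫ biprod.fst, ⟨S', _, hS', hw⟩, biprod.hom_ext _ _ (by simp) (by simp [hw₀])⟩

theorem Q_map_biprod_inl_comp_fst (A B : C) :
    (RClass S M).Q.map (biprod.inl : A ⟶ A ⊞ B) ≫ (RClass S M).Q.map biprod.fst = 𝟙 _ := by
  rw [← Functor.map_comp, biprod.inl_fst, (RClass S M).Q.map_id]

theorem isIso_Q_map_biprod_inl (hwic : S.WIC) (A : C) {S' : C} (hS' : S' ∈ M) :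
    IsIso ((RClass S M).Q.map (biprod.inl : A ⟶ A ⊞ S')) := by
  obtain ⟨A', w, g, hw, rfl⟩ := exists_rClass_eq_comp_biprod_inl hwic A hS'
  have : IsIso ((RClass S M).Q.map g ≫ (RClass S M).Q.map (biprod.inl : A ⟶ A ⊞ S')) := by
    rw [← Functor.map_comp]
    exact (RClass S M).Q_inverts _ hw
  exact isIso_of_comp_eq_id_of_isIso_comp (Q_map_biprod_inl_comp_fst A S') ((RClass S M).Q.map g)

theorem Q_map_biprod_fst_eq_inv (hwic : S.WIC) (A : C) {S' : C} (hS' : S' ∈ M) :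
    haveI := isIso_Q_map_biprod_inl hwic A hS'
    (RClass S M).Q.map (biprod.fst : A ⊞ S' ⟶ A) = inv ((RClass S M).Q.map biprod.inl) := by
  have := isIso_Q_map_biprod_inl hwic A hS'
  exact IsIso.eq_inv_of_hom_inv_id (Q_map_biprod_inl_comp_fst A S')

theorem isIso_Q_map_biprod_fst (hwic : S.WIC) (A : C) {S' : C} (hS' : S' ∈ M) :
    IsIso ((RClass S M).Q.map (biprod.fst : A ⊞ S' ⟶ A)) := by
  have := isIso_Q_map_biprod_inl hwic A hS'
  rw [Q_map_biprod_fst_eq_inv hwic A hS']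
  infer_instance

theorem Q_map_add_eq_of_factorsThru (hwic : S.WIC) {A B : C} (f : A ⟶ B) {f' : A ⟶ B}
    (hf' : FactorsThru M f') : (RClass S M).Q.map (f + f') = (RClass S M).Q.map f := by
  obtain ⟨W, a, b, hW, rfl⟩ := hf'
  have := isIso_Q_map_biprod_fst hwic A hW
  have hsections :
      (RClass S M).Q.map (biprod.lift (𝟙 A) a) = (RClass S M).Q.map biprod.inl := by
    rw [← cancel_mono ((RClass S M).Q.map biprod.fst), ← Functor.map_comp, ← Functor.map_comp,
      biprod.lift_fst, biprod.inl_fst]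
  calc (RClass S M).Q.map (f + a ≫ b)
      = (RClass S M).Q.map (biprod.lift (𝟙 A) a ≫ biprod.desc f b) := by simp
    _ = (RClass S M).Q.map (biprod.inl ≫ biprod.desc f b) := by
      rw [Functor.map_comp, hsections, ← Functor.map_comp]
    _ = (RClass S M).Q.map f := by rw [biprod.inl_desc]

end Localization

/-- Lemma 3.15 (Gabriel–Zisman localization `B/S`): (1) for any object `A` and
any `S' ∈ S`, the projection `A ⊞ S' ⟶ A` becomes invertible in `B/S`, with
inverse the canonical inclusion `A ⟶ A ⊞ S'`; (2) if `f'` factors through an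
object of `W = X ∩ Y` (so `f' = 0` in `B/[W]`), then `f + f'` and `f` have the
same image in `B/S`. -/
theorem gabrielZisman_localization_basic (k : Type*) [Field k]
    [CategoryTheory.Linear k C] [∀ A B : C, Module.Finite k (A ⟶ B)]
    [IsIdempotentComplete C] [HasBinaryBiproducts C]
    (S : ExtStruct.{w} C) (hwic : S.WIC) (X V U Y Sset : Set C)
    (htw : IsTwinCotorsionPair S X V U Y)
    (hext : S.ExtensionClosed Sset) (hctp : IsCotorsionPairIn S Sset X Y) :
    (∀ (A S' : C), S' ∈ Sset →
      IsIso ((RClass S Sset).Q.map (biprod.fst : A ⊞ S' ⟶ A)) ∧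
      (RClass S Sset).Q.map (biprod.fst : A ⊞ S' ⟶ A) ≫
        (RClass S Sset).Q.map (biprod.inl : A ⟶ A ⊞ S') = 𝟙 _ ∧
      (RClass S Sset).Q.map (biprod.inl : A ⟶ A ⊞ S') ≫
        (RClass S Sset).Q.map (biprod.fst : A ⊞ S' ⟶ A) = 𝟙 _) ∧
    (∀ ⦃B' C' : C⦄ (f f' : B' ⟶ C'), FactorsThru (X ∩ Y) f' →
      (RClass S Sset).Q.map (f + f') = (RClass S Sset).Q.map f) := by
  refine ⟨fun A S' hS' => ?_, fun B' C' f f' ⟨W, a, b, hW, hab⟩ => ?_⟩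
  · have := isIso_Q_map_biprod_inl hwic A hS'
    rw [Q_map_biprod_fst_eq_inv hwic A hS']
    exact ⟨inferInstance, IsIso.inv_hom_id _, IsIso.hom_inv_id _⟩
  · exact Q_map_add_eq_of_factorsThru hwic f ⟨W, a, b, hctp.subset_fst hW.1, hab⟩
end

section
/- Let B be a triangulated category with shift [1] and ((X,V),(U,Y)) a twin cotorsion pair such that X ∩ V = U ∩ Y and (U,Y) is hereditary. Then M = S_L = X * Y[1] is the unique extension-closed subcategory of B in which (X,Y) is a cotorsion pair, and M is closed under taking cones (equivalently M[1] ⊆ M). -/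
open CategoryTheory CategoryTheory.Limits

universe w v u

variable {C : Type u} [Category.{v} C] [Preadditive C]

open CategoryTheory.Pretriangulated in
/-- The canonical extriangulated structure on a triangulated category:
`E(X, A) = Hom(X, A[1])` and `𝔼`-triangles are the distinguished triangles. -/
def triExtStruct (𝒯 : Type u) [Category.{v} 𝒯] [Preadditive 𝒯] [HasZeroObject 𝒯]
    [HasShift 𝒯 ℤ] [∀ n : ℤ, (shiftFunctor 𝒯 n).Additive] [Pretriangulated 𝒯] :
    ExtStruct.{v} 𝒯 where
  E X A := AddCommGrpCat.of (X ⟶ A⟦(1 : ℤ)⟧)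
  IsTri f g := ∃ h, Triangle.mk f g h ∈ distTriang 𝒯
  tri_comp_zero _ _ h := by
    obtain ⟨δ, hδ⟩ := h
    exact comp_distTriang_mor_zero₁₂ _ hδ
  tri_realize {A X} δ := by
    obtain ⟨B, f, g, hfg⟩ := distinguished_cocone_triangle₂ (δ : X ⟶ A⟦(1 : ℤ)⟧)
    exact ⟨B, f, g, δ, hfg⟩

/-!
Say `q : X' ⟶ B` satisfies `HomSurjShiftInj 𝒰` if `Hom(U, q)` is surjective and
`Hom(U, q⟦1⟧)` is injective for all `U ∈ 𝒰`. Since `𝒴` is the right `Ext¹`-orthogonal of `𝒰`,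
this says exactly that the cocone of `q` lies in `𝒴`, so `S_L` consists of the targets of such
morphisms out of `𝒳`. The property passes to the middle component of a morphism of triangles by
the four lemma, which replaces the octahedral axiom. For a triangle `A ⟶ B ⟶ C ⟶ A⟦1⟧` with such
`X_A ⟶ A` and `X_C ⟶ C`, heredity gives `Hom(𝒳, 𝒴⟦2⟧) = 0`, so `X_C ⟶ A⟦1⟧` lifts to `X_A⟦1⟧`;
its cocone lies in `𝒳` and maps to `B` by such a morphism, hence `S_L` is extension closed.
Heredity also gives `𝒴⟦1⟧ ⊆ 𝒴`, and `𝒳 ∩ 𝒱 = 𝒰 ∩ 𝒴` puts `𝒴` and `𝒳⟦1⟧` into `S_L`. Rotating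
triangles then gives `S_L⟦1⟧ ⊆ S_L`, from which closure under cones, the coapproximations
`B ⟶ Y' ⟶ X'` and uniqueness follow.
-/

open CategoryTheory.Pretriangulated CategoryTheory.Category CategoryTheory.Preadditive ZeroObject

variable {𝒯 : Type u} [Category.{v} 𝒯] [Preadditive 𝒯] [HasZeroObject 𝒯] [HasShift 𝒯 ℤ]
  [∀ n : ℤ, (shiftFunctor 𝒯 n).Additive] [Pretriangulated 𝒯]

lemma coyoneda_exact₂_shift {T : Triangle 𝒯} (hT : T ∈ distTriang 𝒯) {Z : 𝒯}
    (f : Z ⟶ T.obj₂⟦(1 : ℤ)⟧) (hf : f ≫ T.mor₂⟦(1 : ℤ)⟧' = 0) :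
    ∃ g : Z ⟶ T.obj₁⟦(1 : ℤ)⟧, f = g ≫ T.mor₁⟦(1 : ℤ)⟧' := by
  obtain ⟨g, hg⟩ : ∃ g : Z ⟶ T.obj₁⟦(1 : ℤ)⟧, f = g ≫ (-(T.mor₁⟦(1 : ℤ)⟧')) :=
    Triangle.coyoneda_exact₁ _ (rot_of_distTriang _ hT) f hf
  exact ⟨-g, by rw [hg, comp_neg, neg_comp]⟩

structure HomSurjShiftInj (𝒰 : Set 𝒯) {Q B : 𝒯} (q : Q ⟶ B) : Prop where
  lift : ∀ A ∈ 𝒰, ∀ ρ : A ⟶ B, ∃ ρ' : A ⟶ Q, ρ' ≫ q = ρ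
  shift_cancel : ∀ A ∈ 𝒰, ∀ ψ : A ⟶ Q⟦(1 : ℤ)⟧, ψ ≫ q⟦(1 : ℤ)⟧' = 0 → ψ = 0

namespace HomSurjShiftInj

variable {𝒰 : Set 𝒯} {T₁ T₂ : Triangle 𝒯}

/-- The four lemma for the long exact `Hom(A, -)`-sequences of the two triangles. -/
lemma hom₂ (hT₁ : T₁ ∈ distTriang 𝒯) (hT₂ : T₂ ∈ distTriang 𝒯) (φ : T₁ ⟶ T₂)
    (h₁ : HomSurjShiftInj 𝒰 φ.hom₁) (h₃ : HomSurjShiftInj 𝒰 φ.hom₃) :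
    HomSurjShiftInj 𝒰 φ.hom₂ where
  lift A hA ρ := by
    obtain ⟨σ, hσ⟩ := h₃.lift A hA (ρ ≫ T₂.mor₂)
    have hσ₃ : σ ≫ T₁.mor₃ = 0 := h₁.shift_cancel A hA _ <| by
      rw [assoc, φ.comm₃, ← assoc, hσ, assoc, comp_distTriang_mor_zero₂₃ _ hT₂, comp_zero]
    obtain ⟨σ', rfl⟩ := Triangle.coyoneda_exact₃ _ hT₁ σ hσ₃
    obtain ⟨τ, hτ⟩ := Triangle.coyoneda_exact₂ _ hT₂ (ρ - σ' ≫ φ.hom₂) <| by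
      rw [sub_comp, assoc, ← φ.comm₂, ← assoc, hσ, sub_self]
    obtain ⟨τ', rfl⟩ := h₁.lift A hA τ
    exact ⟨σ' + τ' ≫ T₁.mor₁, by rw [add_comp, assoc, φ.comm₁, ← assoc, ← hτ]; abel⟩
  shift_cancel A hA ψ hψ := by
    have hψ₂ : ψ ≫ T₁.mor₂⟦(1 : ℤ)⟧' = 0 := h₃.shift_cancel A hA _ <| by
      rw [assoc, ← Functor.map_comp, φ.comm₂, Functor.map_comp, ← assoc, hψ, zero_comp]
    obtain ⟨χ, rfl⟩ := coyoneda_exact₂_shift hT₁ ψ hψ₂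
    obtain ⟨ω, hω⟩ := Triangle.coyoneda_exact₁ _ hT₂ (χ ≫ φ.hom₁⟦(1 : ℤ)⟧') <| by
      rw [assoc, ← Functor.map_comp, ← φ.comm₁, Functor.map_comp, ← assoc, hψ]
    obtain ⟨ω', rfl⟩ := h₃.lift A hA ω
    have hχ : χ = ω' ≫ T₁.mor₃ := sub_eq_zero.mp <| h₁.shift_cancel A hA _ <| by
      rw [sub_comp, hω, assoc, assoc, ← φ.comm₃, sub_self]
    rw [hχ, assoc, comp_distTriang_mor_zero₃₁ _ hT₁, comp_zero]

end HomSurjShiftInj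

namespace IsCotorsionPair

variable {𝒰 𝒴 : Set 𝒯} (h : IsCotorsionPair (triExtStruct 𝒯) 𝒰 𝒴)
include h

lemma hom_shift_eq_zero {A B : 𝒯} (hA : A ∈ 𝒰) (hB : B ∈ 𝒴) (φ : A ⟶ B⟦(1 : ℤ)⟧) : φ = 0 :=
  h.ext_vanish A hA B hB φ

lemma mem_fst_of_hom_shift_eq_zero {Z : 𝒯} (hZ : ∀ B ∈ 𝒴, ∀ φ : Z ⟶ B⟦(1 : ℤ)⟧, φ = 0) :
    Z ∈ 𝒰 := by
  obtain ⟨B, A, f, g, hB, hA, δ, hT⟩ := h.approx_fst Z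
  obtain ⟨s, hs⟩ := Triangle.coyoneda_exact₃ _ hT (𝟙 Z) ((id_comp δ).trans (hZ B hB δ))
  exact h.summands_fst hA ⟨s, g, hs.symm⟩

lemma mem_snd_of_hom_shift_eq_zero {Z : 𝒯} (hZ : ∀ A ∈ 𝒰, ∀ φ : A ⟶ Z⟦(1 : ℤ)⟧, φ = 0) :
    Z ∈ 𝒴 := by
  obtain ⟨B, A, f, g, hB, hA, δ, hT⟩ := h.approx_snd Z
  have : Mono f := Triangle.mono₁ _ hT (hZ A hA δ)
  have : IsSplitMono f := isSplitMono_of_mono f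
  exact h.summands_snd hB ⟨f, retraction f, IsSplitMono.id f⟩

lemma zero_mem_snd : (0 : 𝒯) ∈ 𝒴 :=
  h.mem_snd_of_hom_shift_eq_zero fun _ _ _ =>
    ((shiftFunctor 𝒯 (1 : ℤ)).map_isZero (isZero_zero 𝒯)).eq_of_tgt _ _

lemma extensionClosed_fst : (triExtStruct 𝒯).ExtensionClosed 𝒰 := by
  rintro A E C f g ⟨δ, hT⟩ hA hC
  refine h.mem_fst_of_hom_shift_eq_zero fun B hB φ => ?_
  obtain ⟨ψ, rfl⟩ : ∃ ψ : C ⟶ B⟦(1 : ℤ)⟧, φ = g ≫ ψ :=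
    Triangle.yoneda_exact₂ _ hT φ (h.hom_shift_eq_zero hA hB _)
  rw [h.hom_shift_eq_zero hC hB ψ, comp_zero]

lemma extensionClosed_snd : (triExtStruct 𝒯).ExtensionClosed 𝒴 := by
  rintro A E C f g ⟨δ, hT⟩ hA hC
  refine h.mem_snd_of_hom_shift_eq_zero fun B hB φ => ?_
  obtain ⟨ψ, rfl⟩ : ∃ ψ : B ⟶ A⟦(1 : ℤ)⟧, φ = ψ ≫ f⟦(1 : ℤ)⟧' :=
    coyoneda_exact₂_shift hT φ (h.hom_shift_eq_zero hB hC _)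
  rw [h.hom_shift_eq_zero hB hA ψ, zero_comp]

lemma shift_mem_snd (hher : (triExtStruct 𝒯).ConesClosed 𝒴) {B : 𝒯} (hB : B ∈ 𝒴) :
    B⟦(1 : ℤ)⟧ ∈ 𝒴 :=
  hher (0 : B ⟶ 0) 0 ⟨_, contractible_distinguished₂ B⟩ hB h.zero_mem_snd

lemma mem_snd_iff_homSurjShiftInj {T : Triangle 𝒯} (hT : T ∈ distTriang 𝒯) :
    T.obj₁ ∈ 𝒴 ↔ HomSurjShiftInj 𝒰 T.mor₂ := by
  refine ⟨fun hN => ⟨fun A hA ρ => ?_, fun A hA ψ hψ => ?_⟩, fun hq => ?_⟩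
  · obtain ⟨ρ', hρ'⟩ := Triangle.coyoneda_exact₃ _ hT ρ (h.hom_shift_eq_zero hA hN _)
    exact ⟨ρ', hρ'.symm⟩
  · obtain ⟨ε, rfl⟩ := coyoneda_exact₂_shift hT ψ hψ
    rw [h.hom_shift_eq_zero hA hN ε, zero_comp]
  · refine h.mem_snd_of_hom_shift_eq_zero fun A hA φ => ?_
    have hφ : φ ≫ T.mor₁⟦(1 : ℤ)⟧' = 0 := hq.shift_cancel A hA _ <| by
      rw [assoc, ← Functor.map_comp, comp_distTriang_mor_zero₁₂ _ hT, Functor.map_zero,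
        comp_zero]
    obtain ⟨ρ, rfl⟩ := Triangle.coyoneda_exact₁ _ hT φ hφ
    obtain ⟨ρ', rfl⟩ := hq.lift A hA ρ
    rw [assoc, comp_distTriang_mor_zero₂₃ _ hT, comp_zero]

lemma mem_SLm_iff {𝒳 : Set 𝒯} {B : 𝒯} :
    B ∈ SLm (triExtStruct 𝒯) 𝒳 𝒴 ↔ ∃ X' ∈ 𝒳, ∃ q : X' ⟶ B, HomSurjShiftInj 𝒰 q := by
  constructor
  · rintro ⟨Y', X', f, q, hY', hX', δ, hT⟩
    exact ⟨X', hX', q, (h.mem_snd_iff_homSurjShiftInj hT).mp hY'⟩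
  · rintro ⟨X', hX', q, hq⟩
    obtain ⟨Y', f, δ, hT⟩ := distinguished_cocone_triangle₁ q
    exact ⟨Y', X', f, q, (h.mem_snd_iff_homSurjShiftInj hT).mpr hq, hX', δ, hT⟩

end IsCotorsionPair

lemma conesClosed_of_shift_mem {M : Set 𝒯} (hM : (triExtStruct 𝒯).ExtensionClosed M)
    (hshift : ∀ B ∈ M, B⟦(1 : ℤ)⟧ ∈ M) : (triExtStruct 𝒯).ConesClosed M := by
  rintro A B C f g ⟨δ, hT⟩ hA hB
  exact hM g δ ⟨_, rot_of_distTriang _ hT⟩ hB (hshift A hA)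

section TwinCotorsionPair

variable {𝒳 𝒱 𝒰 𝒴 : Set 𝒯}

lemma fst_subset_SLm (hUY : IsCotorsionPair (triExtStruct 𝒯) 𝒰 𝒴) :
    𝒳 ⊆ SLm (triExtStruct 𝒯) 𝒳 𝒴 :=
  fun X' hX' => ⟨0, X', 0, 𝟙 X', hUY.zero_mem_snd, hX', 0, contractible_distinguished₁ X'⟩

lemma snd_subset_SLm (hUY : IsCotorsionPair (triExtStruct 𝒯) 𝒰 𝒴) (hW : 𝒳 ∩ 𝒱 = 𝒰 ∩ 𝒴) :
    𝒴 ⊆ SLm (triExtStruct 𝒯) 𝒳 𝒴 := by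
  intro Y' hY'
  obtain ⟨Y₁, U₁, f, g, hY₁, hU₁, δ, hT⟩ := hUY.approx_fst Y'
  have hU₁Y : U₁ ∈ 𝒴 := hUY.extensionClosed_snd f g ⟨δ, hT⟩ hY₁ hY'
  have hU₁X : U₁ ∈ 𝒳 ∩ 𝒱 := hW ▸ ⟨hU₁, hU₁Y⟩
  exact ⟨Y₁, U₁, f, g, hY₁, hU₁X.1, δ, hT⟩

lemma shift_mem_SLm_of_mem_fst (hXV : IsCotorsionPair (triExtStruct 𝒯) 𝒳 𝒱)
    (hW : 𝒳 ∩ 𝒱 = 𝒰 ∩ 𝒴) {X' : 𝒯} (hX' : X' ∈ 𝒳) :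
    X'⟦(1 : ℤ)⟧ ∈ SLm (triExtStruct 𝒯) 𝒳 𝒴 := by
  obtain ⟨V₂, X₂, f, g, hV₂, hX₂, δ, hT⟩ := hXV.approx_fst (X'⟦(1 : ℤ)⟧)
  have hX'' : X'⟦(1 : ℤ)⟧⟦(-1 : ℤ)⟧ ∈ 𝒳 :=
    let e := (shiftEquiv 𝒯 (1 : ℤ)).unitIso.app X'
    hXV.summands_fst hX' ⟨e.inv, e.hom, e.inv_hom_id⟩
  have hV₂X : V₂ ∈ 𝒳 :=
    hXV.extensionClosed_fst _ _ ⟨_, inv_rot_of_distTriang _ hT⟩ hX'' hX₂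
  have hV₂Y : V₂ ∈ 𝒰 ∩ 𝒴 := hW ▸ ⟨hV₂X, hV₂⟩
  exact ⟨V₂, X₂, f, g, hV₂Y.2, hX₂, δ, hT⟩

lemma extensionClosed_SLm (hXV : IsCotorsionPair (triExtStruct 𝒯) 𝒳 𝒱)
    (hUY : IsCotorsionPair (triExtStruct 𝒯) 𝒰 𝒴) (hXU : 𝒳 ⊆ 𝒰)
    (hher : (triExtStruct 𝒯).ConesClosed 𝒴) :
    (triExtStruct 𝒯).ExtensionClosed (SLm (triExtStruct 𝒯) 𝒳 𝒴) := by
  rintro A B C a b ⟨δ, hT⟩ ⟨Y_A, X_A, f_A, p, hY_A, hX_A, δ_A, hT_A⟩ hC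
  obtain ⟨X_C, hX_C, x, hx⟩ := hUY.mem_SLm_iff.mp hC
  obtain ⟨θ, hθ⟩ : ∃ θ : X_C ⟶ X_A⟦(1 : ℤ)⟧, x ≫ δ = θ ≫ p⟦(1 : ℤ)⟧' :=
    coyoneda_exact₂_shift (rot_of_distTriang _ hT_A) (x ≫ δ)
      (hUY.hom_shift_eq_zero (hXU hX_C) (hUY.shift_mem_snd hher hY_A) _)
  obtain ⟨X_B, i, j, hT_B⟩ := distinguished_cocone_triangle₂ θ
  obtain ⟨q, hq₁, hq₂⟩ := complete_distinguished_triangle_morphism₂ _ _ hT_B hT p x hθ.symm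
  have hp : HomSurjShiftInj 𝒰 p := (hUY.mem_snd_iff_homSurjShiftInj hT_A).mp hY_A
  have hq : HomSurjShiftInj 𝒰 q :=
    HomSurjShiftInj.hom₂ hT_B hT (Triangle.homMk _ _ p q x hq₁ hq₂ hθ.symm) hp hx
  exact hUY.mem_SLm_iff.mpr
    ⟨X_B, hXV.extensionClosed_fst i j ⟨θ, hT_B⟩ hX_A hX_C, q, hq⟩

lemma shift_mem_SLm (hXV : IsCotorsionPair (triExtStruct 𝒯) 𝒳 𝒱)
    (hUY : IsCotorsionPair (triExtStruct 𝒯) 𝒰 𝒴) (hXU : 𝒳 ⊆ 𝒰) (hW : 𝒳 ∩ 𝒱 = 𝒰 ∩ 𝒴)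
    (hher : (triExtStruct 𝒯).ConesClosed 𝒴) {B : 𝒯} (hB : B ∈ SLm (triExtStruct 𝒯) 𝒳 𝒴) :
    B⟦(1 : ℤ)⟧ ∈ SLm (triExtStruct 𝒯) 𝒳 𝒴 := by
  obtain ⟨Y₀, X₀, f, g, hY₀, hX₀, δ, hT⟩ := hB
  have hT' := rot_of_distTriang _ (rot_of_distTriang _
    (rot_of_distTriang _ (rot_of_distTriang _ hT)))
  exact extensionClosed_SLm hXV hUY hXU hher _ _ ⟨_, hT'⟩
    (shift_mem_SLm_of_mem_fst hXV hW hX₀)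
    (snd_subset_SLm hUY hW (hUY.shift_mem_snd hher (hUY.shift_mem_snd hher hY₀)))

lemma mem_SRm_of_shift_mem_SLm (hUY : IsCotorsionPair (triExtStruct 𝒯) 𝒰 𝒴) {B : 𝒯}
    (hB : B⟦(1 : ℤ)⟧ ∈ SLm (triExtStruct 𝒯) 𝒳 𝒴) : B ∈ SRm (triExtStruct 𝒯) 𝒳 𝒴 := by
  obtain ⟨X', hX', q, hq⟩ := hUY.mem_SLm_iff.mp hB
  obtain ⟨Y', f, g, hT⟩ := distinguished_cocone_triangle₂ q
  exact ⟨Y', X', f, g, (hUY.mem_snd_iff_homSurjShiftInj (rot_of_distTriang _ hT)).mpr hq,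
    hX', q, hT⟩

lemma eq_SLm_of_isCotorsionPairIn (hUY : IsCotorsionPair (triExtStruct 𝒯) 𝒰 𝒴)
    (hher : (triExtStruct 𝒯).ConesClosed 𝒴) {M : Set 𝒯}
    (hM : (triExtStruct 𝒯).ExtensionClosed M) (hMXY : IsCotorsionPairIn (triExtStruct 𝒯) M 𝒳 𝒴) :
    M = SLm (triExtStruct 𝒯) 𝒳 𝒴 := by
  refine Set.Subset.antisymm hMXY.approx_fst ?_
  rintro B ⟨Y₀, X₀, f, g, hY₀, hX₀, δ, hT⟩
  exact hM g δ ⟨_, rot_of_distTriang _ hT⟩ (hMXY.subset_fst hX₀)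
    (hMXY.subset_snd (hUY.shift_mem_snd hher hY₀))

end TwinCotorsionPair

open CategoryTheory.Pretriangulated in
/-- Proposition 3.31: in a triangulated category, if `((X, V), (U, Y))` is a
twin cotorsion pair with `X ∩ V = U ∩ Y` such that `(U, Y)` is hereditary,
then `M = S_L = X * Y[1]` is the unique extension closed subcategory in which
`(X, Y)` is a cotorsion pair, and `M` is closed under taking cones
(equivalently, `M[1] ⊆ M`). -/
theorem triangulated_unique_extensionClosed (𝒯 : Type u) [Category.{v} 𝒯]
    [Preadditive 𝒯] [HasZeroObject 𝒯] [HasShift 𝒯 ℤ]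
    [∀ n : ℤ, (shiftFunctor 𝒯 n).Additive] [Pretriangulated 𝒯]
    (k : Type*) [Field k] [CategoryTheory.Linear k 𝒯]
    [∀ A B : 𝒯, Module.Finite k (A ⟶ B)] [IsIdempotentComplete 𝒯]
    (X V U Y : Set 𝒯)
    (htw : IsTwinCotorsionPair (triExtStruct 𝒯) X V U Y)
    (hW : X ∩ V = U ∩ Y)
    (hher : IsHereditaryPair (triExtStruct 𝒯) U Y) :
    IsCotorsionPairIn (triExtStruct 𝒯) (SLm (triExtStruct 𝒯) X Y) X Y ∧
    (triExtStruct 𝒯).ExtensionClosed (SLm (triExtStruct 𝒯) X Y) ∧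
    (∀ M : Set 𝒯, (triExtStruct 𝒯).ExtensionClosed M →
      IsCotorsionPairIn (triExtStruct 𝒯) M X Y → M = SLm (triExtStruct 𝒯) X Y) ∧
    (triExtStruct 𝒯).ConesClosed (SLm (triExtStruct 𝒯) X Y) ∧
    (∀ A ∈ SLm (triExtStruct 𝒯) X Y, A⟦(1 : ℤ)⟧ ∈ SLm (triExtStruct 𝒯) X Y) := by
  obtain ⟨hXV, hUY, hXU⟩ := htw
  have hext := extensionClosed_SLm hXV hUY hXU hher.2
  have hshift : ∀ A ∈ SLm (triExtStruct 𝒯) X Y, A⟦(1 : ℤ)⟧ ∈ SLm (triExtStruct 𝒯) X Y :=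
    fun _ hA => shift_mem_SLm hXV hUY hXU hW hher.2 hA
  refine ⟨⟨fst_subset_SLm hUY, snd_subset_SLm hUY hW, fun _ _ _ hB => hXV.summands_fst hB,
    fun _ _ _ hB => hUY.summands_snd hB, fun X' hX' => hUY.ext_vanish X' (hXU hX'),
    fun _ hB => hB, fun _ hB => mem_SRm_of_shift_mem_SLm hUY (hshift _ hB)⟩,
    hext, fun _ hM hMXY => eq_SLm_of_isCotorsionPairIn hUY hher.2 hM hMXY,
    conesClosed_of_shift_mem hext hshift, hshift⟩
end
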